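/- (Theorem 7, probabilistic model selection consistency for partial correlation graphs.) Let (Ω, μ) be a probability space, p ≥ 1, let K be a real p × p matrix, let (a_n) be a sequence of positive reals, C > 0, and for each n let K̂_n : Ω → (p × p real matrices) be measurable with μ{ω : max_{i,j} |K̂_n(ω)_{ij} − K_{ij}| > C·a_n} → 0 as n → ∞. Let (t_n) be a sequence of thresholds with C·a_n < t_n, and suppose that every nonzero off-diagonal entry of K satisfies |K_{ij}| ≥ t_n + C·a_n for all n. Then μ{ω : for all pairs i ≠ j, |K̂_n(ω)_{ij}| ≥ t_n if and only if K_{ij} ≠ 0} → 1 as n → ∞. -/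

import Mathlib

open MeasureTheory Filter

/-! On the event that every entry of `K̂ₙ` is within `C aₙ` of `K`, thresholding at `tₙ` recovers
the support exactly: a zero entry is estimated below `C aₙ < tₙ`, while a nonzero one, being at
least `tₙ + C aₙ`, is estimated at least `tₙ`. The complement of that event has vanishing
probability. -/

theorem le_abs_iff_ne_zero_of_abs_sub_le {x k ε t : ℝ} (hx : |x - k| ≤ ε) (hεt : ε < t)
    (hk : k ≠ 0 → t + ε ≤ |k|) : t ≤ |x| ↔ k ≠ 0 := by
  constructor
  · rintro hxt rfl
    rw [sub_zero] at hx
    linarith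
  · intro hk0
    have hdist : |k| - |x| ≤ |x - k| := abs_sub_comm k x ▸ abs_sub_abs_le_abs_sub k x
    linarith [hk hk0]

theorem tendsto_measure_one_of_compl_subset {Ω ι : Type*} [MeasurableSpace Ω] {μ : Measure Ω}
    [IsProbabilityMeasure μ] {l : Filter ι} {s t : ι → Set Ω}
    (hs : Tendsto (fun i => μ (s i)) l (nhds 0)) (hst : ∀ i, (s i)ᶜ ⊆ t i) :
    Tendsto (fun i => μ (t i)) l (nhds 1) := by
  have hlower : ∀ i, 1 - μ (s i) ≤ μ (t i) := fun i =>
    tsub_le_iff_left.mpr <| calc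
      1 = μ Set.univ := measure_univ.symm
      _ ≤ μ (s i) + μ (s i)ᶜ := measure_univ_le_add_compl _
      _ ≤ μ (s i) + μ (t i) := by gcongr; exact hst i
  have hlim : Tendsto (fun i => 1 - μ (s i)) l (nhds 1) := by
    simpa using ENNReal.Tendsto.sub tendsto_const_nhds hs (Or.inl ENNReal.one_ne_top)
  exact tendsto_of_tendsto_of_tendsto_of_le_of_le hlim tendsto_const_nhds hlower
    fun _ => prob_le_one

theorem pg_model_selection_consistency_general {Ω : Type*} [MeasurableSpace Ω] (μ : Measure Ω)
    [IsProbabilityMeasure μ] (p : ℕ)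
    (K : Fin p → Fin p → ℝ) (a : ℕ → ℝ) (C : ℝ)
    (Khat : ℕ → Ω → Fin p → Fin p → ℝ)
    (hconv : Tendsto (fun n => μ {ω | ∃ i j, |Khat n ω i j - K i j| > C * a n})
      atTop (nhds 0))
    (t : ℕ → ℝ) (ht : ∀ n, C * a n < t n)
    (hmin : ∀ n, ∀ i j, i ≠ j → K i j ≠ 0 → |K i j| ≥ t n + C * a n) :
    Tendsto (fun n => μ {ω | ∀ i j, i ≠ j → (|Khat n ω i j| ≥ t n ↔ K i j ≠ 0)})
      atTop (nhds 1) := by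
  refine tendsto_measure_one_of_compl_subset hconv fun n ω hω i j hij => ?_
  simp only [Set.mem_compl_iff, Set.mem_ofPred_eq, not_exists, gt_iff_lt, not_lt] at hω
  exact le_abs_iff_ne_zero_of_abs_sub_le (hω i j) (ht n) (hmin n i j hij)

/-- Theorem 7 (probabilistic model selection consistency for partial correlation
graphs): if `μ{ω : max_{i,j} |K̂_n(ω)_{ij} − K_{ij}| > C·a_n} → 0`, `C·a_n < t_n`, and
every nonzero off-diagonal entry of `K` satisfies `|K_{ij}| ≥ t_n + C·a_n` for all `n`,
then `μ{ω : ∀ i ≠ j, |K̂_n(ω)_{ij}| ≥ t_n ↔ K_{ij} ≠ 0} → 1`. -/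
theorem pg_model_selection_consistency {Ω : Type*} [MeasurableSpace Ω] (μ : Measure Ω)
    [IsProbabilityMeasure μ] (p : ℕ) (hp : 1 ≤ p)
    (K : Fin p → Fin p → ℝ) (a : ℕ → ℝ) (ha : ∀ n, 0 < a n) (C : ℝ) (hC : 0 < C)
    (Khat : ℕ → Ω → Fin p → Fin p → ℝ) (hmeas : ∀ n, Measurable (Khat n))
    (hconv : Tendsto (fun n => μ {ω | ∃ i j, |Khat n ω i j - K i j| > C * a n})
      atTop (nhds 0))
    (t : ℕ → ℝ) (ht : ∀ n, C * a n < t n)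
    (hmin : ∀ n, ∀ i j, i ≠ j → K i j ≠ 0 → |K i j| ≥ t n + C * a n) :
    Tendsto (fun n => μ {ω | ∀ i j, i ≠ j → (|Khat n ω i j| ≥ t n ↔ K i j ≠ 0)})
      atTop (nhds 1) :=
  pg_model_selection_consistency_general μ p K a C Khat hconv t ht hmin
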